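/- Every locally compact group G has a compact subgroup K such that the quotient space G/K is metrizable; moreover, if G is non-metrizable, then χ(K) = χ(G) for any such K, and if G is σ-compact, K can be chosen normal in G. -/

import Mathlib

/-!
Let `K` be a subgroup of `G` with `G ⧸ K` metrizable. Take a decreasing countable base `W n` of
closed neighbourhoods of the coset `K`, and for each member `A` of a neighbourhood base of `1` in
`K` a compact neighbourhood `N A` of `1` in `G` whose trace on `K` lies in `A`. The compact sets
`N A ∩ π⁻¹ (W n)` decrease to `N A ∩ K ⊆ A`, so they form a neighbourhood base of `1` in `G`:
`χ(G) ≤ χ(K) · ℵ₀`, while `χ(K) ≤ χ(G)` holds for any subspace. If `G` is not metrizable then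
`χ(G) > ℵ₀`, so `χ(K)` is infinite and the two characters agree.

Existence is the Kakutani–Kodaira construction. In a σ-compact group choose closed symmetric
neighbourhoods `V n` of `1`, inside a compact one, with `V (n + 1) ^ 2 ⊆ V n` and
`g V (n + 1) g⁻¹ ⊆ V n` for `g` in the `n`-th set of a compact exhaustion. Then `K = ⋂ V n` is a
compact normal subgroup and the images of the `V n` form a countable base at `1` of the group
`G ⧸ K`, which is therefore metrizable. A general locally compact group has an open σ-compact
subgroup `H`, and for the subgroup `K ≤ H` so obtained `G ⧸ K ≃ₜ (G ⧸ H) × H ⧸ K` with `G ⧸ H`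
discrete.
-/

open Topology

/-- The local weight (character) of a topological space at a point: the least cardinality
of a neighbourhood base at the point. -/
noncomputable def localWeight (X : Type u) [TopologicalSpace X] (x : X) : Cardinal.{u} :=
  ⨅ B : {S : Set (Set X) // (𝓝 x).HasBasis (· ∈ S) id}, Cardinal.mk B.1

open Filter Set Pointwise

section LocalWeight

variable {X : Type u} [TopologicalSpace X]

theorem localWeight_le_mk_of_hasBasis {x : X} {ι : Type u} {p : ι → Prop} {s : ι → Set X}
    (h : (𝓝 x).HasBasis p s) : localWeight X x ≤ Cardinal.mk {i // p i} :=
  (ciInf_le' _ (⟨_, h.to_image_id⟩ : {S : Set (Set X) // (𝓝 x).HasBasis (· ∈ S) id})).trans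
    Cardinal.mk_image_le

theorem exists_hasBasis_mk_eq_localWeight (x : X) :
    ∃ S : Set (Set X), (𝓝 x).HasBasis (· ∈ S) id ∧ Cardinal.mk S = localWeight X x := by
  have : Nonempty {S : Set (Set X) // (𝓝 x).HasBasis (· ∈ S) id} := ⟨⟨_, (𝓝 x).basis_sets⟩⟩
  obtain ⟨S, hS⟩ := ciInf_mem fun S : {S : Set (Set X) // (𝓝 x).HasBasis (· ∈ S) id} ↦
    Cardinal.mk S.1
  exact ⟨S.1, S.2, hS⟩

theorem isCountablyGenerated_nhds_of_localWeight_le_aleph0 {x : X}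
    (h : localWeight X x ≤ Cardinal.aleph0) : (𝓝 x).IsCountablyGenerated := by
  obtain ⟨S, hS, hcard⟩ := exists_hasBasis_mk_eq_localWeight x
  have hSc : S.Countable := Set.countable_coe_iff.mp <|
    Cardinal.mk_le_aleph0_iff.mp (hcard.trans_le h)
  exact HasCountableBasis.isCountablyGenerated ⟨hS, hSc⟩

theorem localWeight_subtype_le {s : Set X} (x : s) : localWeight s x ≤ localWeight X x := by
  obtain ⟨S, hS, hcard⟩ := exists_hasBasis_mk_eq_localWeight (x : X)
  rw [← hcard]
  exact localWeight_le_mk_of_hasBasis (nhds_subtype s x ▸ hS.comap _)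

theorem localWeight_le_localWeight_mul_aleph0 [T2Space X] [LocallyCompactSpace X]
    {F : Set X} (x : F) {D : ℕ → Set X} (hD : Antitone D) (hDx : ∀ n, D n ∈ 𝓝 (x : X))
    (hDc : ∀ n, IsClosed (D n)) (hDF : ⋂ n, D n = F) :
    localWeight X x ≤ localWeight F x * Cardinal.aleph0 := by
  obtain ⟨B, hB, hBcard⟩ := exists_hasBasis_mk_eq_localWeight x
  have hN : ∀ A : B, ∃ N ∈ 𝓝 (x : X), IsCompact N ∧ ∀ y : F, (y : X) ∈ N → y ∈ (A : Set F) := by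
    rintro ⟨A, hA⟩
    obtain ⟨O, hO, hOA⟩ := mem_comap.mp (nhds_subtype F x ▸ hB.mem_of_mem hA)
    obtain ⟨N, hN, hNO, hNc⟩ := local_compact_nhds hO
    exact ⟨N, hN, hNc, fun y hy ↦ hOA (hNO hy)⟩
  choose N hNx hNc hNA using hN
  have hbasis : (𝓝 (x : X)).HasBasis (fun _ : B × ℕ ↦ True) (fun i ↦ N i.1 ∩ D i.2) := by
    refine ⟨fun t ↦ ⟨fun ht ↦ ?_, fun ⟨i, _, hi⟩ ↦
      mem_of_superset (inter_mem (hNx i.1) (hDx i.2)) hi⟩⟩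
    have ht' : Subtype.val ⁻¹' interior t ∈ 𝓝 x :=
      nhds_subtype F x ▸ preimage_mem_comap (interior_mem_nhds.mpr ht)
    obtain ⟨A, hA, hAt⟩ := hB.mem_iff.mp ht'
    have hdir : Directed (· ⊇ ·) fun n ↦ N ⟨A, hA⟩ ∩ D n :=
      Antitone.directed_ge fun m n hmn ↦ inter_subset_inter_right _ (hD hmn)
    obtain ⟨n, hn⟩ := exists_subset_nhds_of_isCompact hdir
      (fun n ↦ (hNc _).inter_right (hDc n)) (U := interior t) fun y hy ↦ by
        have hyF : y ∈ F := hDF ▸ mem_iInter.2 fun n ↦ (mem_iInter.1 hy n).2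
        exact isOpen_interior.mem_nhds (hAt (hNA _ ⟨y, hyF⟩ (mem_iInter.1 hy 0).1))
    exact ⟨(⟨A, hA⟩, n), trivial, hn.trans interior_subset⟩
  calc localWeight X x ≤ Cardinal.mk (B × ℕ) :=
        (localWeight_le_mk_of_hasBasis hbasis).trans (Cardinal.mk_subtype_le _)
    _ = localWeight F x * Cardinal.aleph0 := by simp [hBcard]

end LocalWeight

theorem IsTopologicalGroup.metrizableSpace_of_isCountablyGenerated_nhds_one {G : Type*} [Group G]
    [TopologicalSpace G] [IsTopologicalGroup G] [T2Space G] (h : (𝓝 (1 : G)).IsCountablyGenerated) :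
    TopologicalSpace.MetrizableSpace G :=
  letI := IsTopologicalGroup.rightUniformSpace G
  haveI : (uniformity G).IsCountablyGenerated := by
    rw [uniformity_eq_comap_nhds_one']; exact Filter.comap.isCountablyGenerated _ _
  UniformSpace.metrizableSpace

section OpenSubgroup

variable {G : Type*} [Group G] [TopologicalSpace G] [IsTopologicalGroup G] {H K : Subgroup G}

noncomputable def Subgroup.quotientHomeomorphProdOfLE (hH : IsOpen (H : Set G)) (hKH : K ≤ H) :
    G ⧸ K ≃ₜ (G ⧸ H) × H ⧸ K.subgroupOf H :=
  haveI := QuotientGroup.discreteTopology hH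
  let e := (Subgroup.quotientEquivProdOfLE hKH).symm
  have hslice (q : G ⧸ H) : (fun y ↦ e (q, y)) ∘ ((↑) : H → H ⧸ K.subgroupOf H) =
      ((↑) : G → G ⧸ K) ∘ (Quotient.out q * ·) ∘ Subtype.val := rfl
  (e.toHomeomorphOfContinuousOpen
    (continuous_prod_of_discrete_left.2 fun q ↦
      (QuotientGroup.isQuotientMap_mk _).continuous_iff.2 (by rw [hslice]; fun_prop))
    (isOpenMap_prod_of_discrete_left.2 fun q O hO ↦ by
      rw [← image_preimage_eq O QuotientGroup.mk_surjective, ← image_comp, hslice]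
      exact (QuotientGroup.isOpenMap_coe.comp ((Homeomorph.mulLeft _).isOpenMap.comp
        hH.isOpenMap_subtype_val)) _ (hO.preimage QuotientGroup.continuous_mk))).symm

theorem QuotientGroup.metrizableSpace_of_le_isOpen (hH : IsOpen (H : Set G)) (hKH : K ≤ H)
    [TopologicalSpace.MetrizableSpace (H ⧸ K.subgroupOf H)] :
    TopologicalSpace.MetrizableSpace (G ⧸ K) :=
  haveI := QuotientGroup.discreteTopology hH
  (Subgroup.quotientHomeomorphProdOfLE hH hKH).isEmbedding.metrizableSpace

end OpenSubgroup

section KakutaniKodaira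

theorem Subgroup.exists_coe_eq_iUnion_pow {G : Type*} [Group G] {V : Set G} (hV : V⁻¹ = V) :
    ∃ H : Subgroup G, (H : Set G) = ⋃ n : ℕ, V ^ n :=
  ⟨{ carrier := ⋃ n : ℕ, V ^ n
     one_mem' := mem_iUnion.2 ⟨0, by simp⟩
     mul_mem' := fun ha hb ↦ by
       obtain ⟨m, hm⟩ := mem_iUnion.1 ha
       obtain ⟨n, hn⟩ := mem_iUnion.1 hb
       exact mem_iUnion.2 ⟨m + n, pow_add V m n ▸ mul_mem_mul hm hn⟩
     inv_mem' := fun ha ↦ by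
       obtain ⟨n, hn⟩ := mem_iUnion.1 ha
       exact mem_iUnion.2 ⟨n, by rw [← hV, inv_pow]; exact inv_mem_inv.2 hn⟩ }, rfl⟩

variable {G : Type*} [Group G] [TopologicalSpace G] [IsTopologicalGroup G]

theorem IsCompact.pow {M : Type*} [Monoid M] [TopologicalSpace M] [ContinuousMul M]
    {s : Set M} (hs : IsCompact s) : ∀ n : ℕ, IsCompact (s ^ n)
  | 0 => by simp
  | n + 1 => by rw [pow_succ]; exact (hs.pow n).mul hs

theorem exists_isOpen_isSigmaCompact_subgroup [WeaklyLocallyCompactSpace G] :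
    ∃ H : Subgroup G, IsOpen (H : Set G) ∧ IsSigmaCompact (H : Set G) := by
  obtain ⟨C, hCc, hC⟩ := exists_compact_mem_nhds (1 : G)
  obtain ⟨H, hH⟩ := Subgroup.exists_coe_eq_iUnion_pow (V := C ∪ C⁻¹) (by simp [union_comm])
  have hCH : C ⊆ H := hH ▸ subset_iUnion_of_subset 1 (by rw [pow_one]; exact subset_union_left)
  exact ⟨H, H.isOpen_of_mem_nhds (mem_of_superset hC hCH),
    fun n ↦ (C ∪ C⁻¹) ^ n, fun n ↦ (hCc.union hCc.inv).pow n, hH.symm⟩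

theorem eventually_forall_conj_mem {F U : Set G} (hF : IsCompact F) (hU : U ∈ 𝓝 1) :
    ∀ᶠ w in 𝓝 1, ∀ g ∈ F, g * w * g⁻¹ ∈ U :=
  hF.eventually_forall_of_forall_eventually fun g _ ↦ by
    have : Tendsto (fun p : G × G ↦ p.2 * p.1 * p.2⁻¹) (𝓝 (1, g)) (𝓝 1) := by
      simpa using (show Continuous fun p : G × G ↦ p.2 * p.1 * p.2⁻¹ by fun_prop).tendsto (1, g)
    exact this hU

theorem exists_closed_nhds_one_inv_eq_mul_subset_conj {F U : Set G} (hF : IsCompact F)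
    (hU : U ∈ 𝓝 1) :
    ∃ V ∈ 𝓝 1, IsClosed V ∧ V⁻¹ = V ∧ V * V ⊆ U ∧ ∀ g ∈ F, ∀ w ∈ V, g * w * g⁻¹ ∈ U := by
  obtain ⟨V, hV, hVc, hVinv, hVU⟩ :=
    exists_closed_nhds_one_inv_eq_mul_subset (inter_mem hU (eventually_forall_conj_mem hF hU))
  have hVV : V ⊆ V * V := subset_mul_left V (mem_of_mem_nhds hV)
  exact ⟨V, hV, hVc, hVinv, hVU.trans inter_subset_left, fun g hg w hw ↦ (hVU (hVV hw)).2 g hg⟩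

theorem exists_seq_nhds_one_mul_subset_conj [SigmaCompactSpace G] {U : Set G} (hU : U ∈ 𝓝 1) :
    ∃ V : ℕ → Set G, (∀ n, V n ∈ 𝓝 1 ∧ IsClosed (V n) ∧ (V n)⁻¹ = V n) ∧ V 0 ⊆ U ∧
      (∀ n, V (n + 1) * V (n + 1) ⊆ V n) ∧
      ∀ n, ∀ g ∈ compactCovering G n, ∀ w ∈ V (n + 1), g * w * g⁻¹ ∈ V n := by
  choose! W hWn hWc hWinv hWmul hWconj using fun n (U : Set G) (hU : U ∈ 𝓝 1) ↦
    exists_closed_nhds_one_inv_eq_mul_subset_conj (isCompact_compactCovering G n) hU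
  let V : ℕ → Set G := fun n ↦ Nat.rec (W 0 U) (fun n s ↦ W (n + 1) s) n
  have hVn (n : ℕ) : V n ∈ 𝓝 1 := by
    induction n with
    | zero => exact hWn 0 U hU
    | succ n ih => exact hWn _ _ ih
  refine ⟨V, fun n ↦ ⟨hVn n, ?_, ?_⟩, ?_, fun n ↦ hWmul _ _ (hVn n), fun n g hg ↦
    hWconj _ _ (hVn n) g (compactCovering_subset G n.le_succ hg)⟩
  · cases n with
    | zero => exact hWc 0 U hU
    | succ n => exact hWc _ _ (hVn n)
  · cases n with
    | zero => exact hWinv 0 U hU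
    | succ n => exact hWinv _ _ (hVn n)
  · exact (subset_mul_left _ (mem_of_mem_nhds (hVn 0))).trans (hWmul 0 U hU)

theorem Subgroup.exists_coe_eq_iInter {G : Type*} [Group G] {V : ℕ → Set G}
    (hone : ∀ n, 1 ∈ V n) (hinv : ∀ n, (V n)⁻¹ = V n)
    (hmul : ∀ n, V (n + 1) * V (n + 1) ⊆ V n) :
    ∃ K : Subgroup G, (K : Set G) = ⋂ n, V n :=
  ⟨{ carrier := ⋂ n, V n
     one_mem' := mem_iInter.2 hone
     mul_mem' := fun ha hb ↦ mem_iInter.2 fun n ↦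
       hmul n (mul_mem_mul (mem_iInter.1 ha _) (mem_iInter.1 hb _))
     inv_mem' := fun ha ↦ mem_iInter.2 fun n ↦ hinv n ▸ inv_mem_inv.2 (mem_iInter.1 ha n) }, rfl⟩

theorem QuotientGroup.hasBasis_nhds_one_image {K : Subgroup G} {V : ℕ → Set G}
    (hV : Antitone V) (hVn : ∀ n, V n ∈ 𝓝 1) (hVc : ∀ n, IsCompact (V n))
    (hVcl : ∀ n, IsClosed (V n)) (hK : ⋂ n, V n = K) :
    (𝓝 ((1 : G) : G ⧸ K)).HasBasis (fun _ ↦ True) fun n ↦ ((↑) : G → G ⧸ K) '' V n := by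
  have hmap (x : G) : 𝓝 (x : G ⧸ K) = Filter.map (↑) (𝓝 x) := QuotientGroup.nhds_eq K x
  refine ⟨fun t ↦ ⟨fun ht ↦ ?_, fun ⟨n, _, hn⟩ ↦ mem_of_superset ?_ hn⟩⟩
  · obtain ⟨n, hn⟩ := exists_subset_nhds_of_isCompact' hV.directed_ge hVc hVcl fun x hx ↦ by
      have hx1 : (x : G ⧸ K) = ((1 : G) : G ⧸ K) := QuotientGroup.eq.2 (by simpa [hK] using hx)
      rw [← hx1, hmap] at ht
      exact ht
    exact ⟨n, trivial, image_subset_iff.2 hn⟩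
  · exact hmap 1 ▸ image_mem_map (hVn n)

theorem exists_isCompact_normal_metrizableSpace_quotient [WeaklyLocallyCompactSpace G]
    [SigmaCompactSpace G] :
    ∃ K : Subgroup G, IsCompact (K : Set G) ∧ K.Normal ∧
      TopologicalSpace.MetrizableSpace (G ⧸ K) := by
  obtain ⟨C, hCc, hC⟩ := exists_compact_mem_nhds (1 : G)
  obtain ⟨V, hV, hVC, hmul, hconj⟩ := exists_seq_nhds_one_mul_subset_conj hC
  have hanti : Antitone V := antitone_nat_of_succ_le fun n ↦
    (subset_mul_left _ (mem_of_mem_nhds (hV _).1)).trans (hmul n)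
  have hVc (n : ℕ) : IsCompact (V n) :=
    hCc.of_isClosed_subset (hV n).2.1 ((hanti n.zero_le).trans hVC)
  obtain ⟨K, hK⟩ := Subgroup.exists_coe_eq_iInter (fun n ↦ mem_of_mem_nhds (hV n).1)
    (fun n ↦ (hV n).2.2) hmul
  have hKcl : IsClosed (K : Set G) := hK ▸ isClosed_iInter fun n ↦ (hV n).2.1
  have hKc : IsCompact (K : Set G) := (hVc 0).of_isClosed_subset hKcl (hK ▸ iInter_subset _ 0)
  have hKn : K.Normal := by
    refine ⟨fun x hx g ↦ ?_⟩
    rw [← SetLike.mem_coe, hK, mem_iInter] at hx ⊢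
    intro n
    obtain ⟨m, hg⟩ := exists_mem_compactCovering g
    exact hanti (le_max_left n m) <| hconj _ g
      (compactCovering_subset G (le_max_right n m) hg) x (hx _)
  exact ⟨K, hKc, hKn, IsTopologicalGroup.metrizableSpace_of_isCountablyGenerated_nhds_one
    (QuotientGroup.hasBasis_nhds_one_image hanti (fun n ↦ (hV n).1) hVc (fun n ↦ (hV n).2.1)
      hK.symm).isCountablyGenerated⟩

theorem exists_isCompact_metrizableSpace_quotient [LocallyCompactSpace G] :
    ∃ K : Subgroup G, IsCompact (K : Set G) ∧ TopologicalSpace.MetrizableSpace (G ⧸ K) := by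
  obtain ⟨H, hHo, hHσ⟩ := exists_isOpen_isSigmaCompact_subgroup (G := G)
  have : SigmaCompactSpace H := isSigmaCompact_iff_sigmaCompactSpace.mp hHσ
  have : LocallyCompactSpace H := hHo.locallyCompactSpace
  obtain ⟨K, hKc, -, hK⟩ := exists_isCompact_normal_metrizableSpace_quotient (G := H)
  have : TopologicalSpace.MetrizableSpace (H ⧸ (K.map H.subtype).subgroupOf H) := by
    rwa [Subgroup.subgroupOf, Subgroup.comap_map_eq_self_of_injective H.subtype_injective]
  exact ⟨K.map H.subtype, hKc.image continuous_subtype_val,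
    QuotientGroup.metrizableSpace_of_le_isOpen hHo (Subgroup.map_subtype_le K)⟩

end KakutaniKodaira

section Character

variable {G : Type u} [Group G] [TopologicalSpace G] [LocallyCompactSpace G] [T2Space G]

theorem localWeight_le_localWeight_subgroup_mul_aleph0 (K : Subgroup G)
    [TopologicalSpace.MetrizableSpace (G ⧸ K)] :
    localWeight G 1 ≤ localWeight K 1 * Cardinal.aleph0 := by
  obtain ⟨W, hW, hWb⟩ := (closed_nhds_basis ((1 : G) : G ⧸ K)).exists_antitone_subbasis
  have hWK : ⋂ n, ((↑) : G → G ⧸ K) ⁻¹' W n = K := by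
    rw [← preimage_iInter, ← QuotientGroup.preimage_mk_one]
    simpa using congrArg _ (biInter_basis_nhds hWb.toHasBasis)
  exact localWeight_le_localWeight_mul_aleph0 (F := (K : Set G)) 1
    (fun m n h ↦ preimage_mono (hWb.antitone h))
    (fun n ↦ QuotientGroup.continuous_mk.continuousAt.preimage_mem_nhds (hWb.mem n))
    (fun n ↦ (hW n).2.preimage QuotientGroup.continuous_mk) hWK

theorem localWeight_subgroup_eq_of_not_metrizableSpace [IsTopologicalGroup G]
    (hG : ¬ TopologicalSpace.MetrizableSpace G) (K : Subgroup G)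
    [TopologicalSpace.MetrizableSpace (G ⧸ K)] :
    localWeight K 1 = localWeight G 1 := by
  have hle := localWeight_le_localWeight_subgroup_mul_aleph0 K
  have hK : Cardinal.aleph0 < localWeight K 1 := by
    by_contra! hK
    refine hG (IsTopologicalGroup.metrizableSpace_of_isCountablyGenerated_nhds_one
      (isCountablyGenerated_nhds_of_localWeight_le_aleph0 (hle.trans ?_)))
    exact (mul_le_mul' hK le_rfl).trans Cardinal.aleph0_mul_aleph0.le
  rw [Cardinal.mul_aleph0_eq hK.le] at hle
  exact (localWeight_subtype_le (1 : K)).antisymm hle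

end Character

/-- Every locally compact group `G` has a compact subgroup `K` with `G/K`
metrizable; if `G` is non-metrizable then `χ(K) = χ(G)` for every such `K`; and if `G` is
σ-compact, `K` can be chosen normal in `G`. -/
theorem stmt_11 {G : Type u} [Group G] [TopologicalSpace G] [IsTopologicalGroup G]
    [LocallyCompactSpace G] [T2Space G] :
    (∃ K : Subgroup G, IsCompact (K : Set G) ∧
      TopologicalSpace.MetrizableSpace (G ⧸ K)) ∧
    (¬ TopologicalSpace.MetrizableSpace G →
      ∀ K : Subgroup G, IsCompact (K : Set G) →
        TopologicalSpace.MetrizableSpace (G ⧸ K) →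
          localWeight (↥K) (1 : K) = localWeight G (1 : G)) ∧
    (SigmaCompactSpace G →
      ∃ K : Subgroup G, IsCompact (K : Set G) ∧ K.Normal ∧
        TopologicalSpace.MetrizableSpace (G ⧸ K)) :=
  ⟨exists_isCompact_metrizableSpace_quotient,
    fun hG K _ _ ↦ localWeight_subgroup_eq_of_not_metrizableSpace hG K,
    fun _ ↦ exists_isCompact_normal_metrizableSpace_quotient⟩
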